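/- For any finite subset ξ of ⟦n⟧_j with j > 0, the faces of the extension ξ⊙ satisfy: if j is even, (ξ⊙)⁺ = (ξ⁺)⊙ ∪ ξ⊕ and (ξ⊙)⁻ = (ξ⁻)⊙ ∪ ξ⊖; if j is odd, (ξ⊙)⁺ = (ξ⁺)⊙ ∪ ξ⊖ and (ξ⊙)⁻ = (ξ⁻)⊙ ∪ ξ⊕. Moreover (ξη)^ε = (ξ^ε)η for η ∈ {⊖, ⊕} and ε ∈ {+,−}. -/

import Mathlib

/-- The three symbols `⊖`, `⊙`, `⊕`. -/
inductive CSym : Type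
  | minus : CSym
  | mid : CSym
  | plus : CSym
deriving DecidableEq

/-- `Str n j` is `⟦n⟧_j`: strings of length `n` over `{⊖,⊙,⊕}` with exactly `j`
occurrences of `⊙`. -/
def Str (n j : ℕ) : Type := {l : List CSym // l.length = n ∧ l.count CSym.mid = j}

/-- The even faces `a⁺` of `a ∈ ⟦n⟧_{j+1}`: replace the `i`-th occurrence of `⊙`
by `⊕` if `i` is odd (i.e. the number of earlier `⊙`'s is even), and by `⊖` if
`i` is even. -/
def posF {n j : ℕ} (a : Str n (j+1)) : Set (Str n j) :=
  {b | ∃ (q : ℕ) (h : q < a.1.length), a.1.get ⟨q, h⟩ = CSym.mid ∧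
    b.1 = a.1.set q (if Even ((a.1.take q).count CSym.mid) then CSym.plus else CSym.minus)}

/-- The odd faces `a⁻` of `a ∈ ⟦n⟧_{j+1}`: replace the `i`-th occurrence of `⊙`
by `⊖` if `i` is odd, and by `⊕` if `i` is even. -/
def negF {n j : ℕ} (a : Str n (j+1)) : Set (Str n j) :=
  {b | ∃ (q : ℕ) (h : q < a.1.length), a.1.get ⟨q, h⟩ = CSym.mid ∧
    b.1 = a.1.set q (if Even ((a.1.take q).count CSym.mid) then CSym.minus else CSym.plus)}

def sPos {n j : ℕ} (ξ : Set (Str n (j+1))) : Set (Str n j) := ⋃ a ∈ ξ, posF a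
def sNeg {n j : ℕ} (ξ : Set (Str n (j+1))) : Set (Str n j) := ⋃ a ∈ ξ, negF a

/-- Append `⊖` to a string. -/
def appM {n j : ℕ} (a : Str n j) : Str (n+1) j :=
  ⟨a.1 ++ [CSym.minus], by
    refine ⟨by simp [a.2.1], ?_⟩
    simp [List.count_append, a.2.2, List.count_singleton]⟩

/-- Append `⊕` to a string. -/
def appP {n j : ℕ} (a : Str n j) : Str (n+1) j :=
  ⟨a.1 ++ [CSym.plus], by
    refine ⟨by simp [a.2.1], ?_⟩
    simp [List.count_append, a.2.2, List.count_singleton]⟩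

/-- Append `⊙` to a string. -/
def appO {n j : ℕ} (a : Str n j) : Str (n+1) (j+1) :=
  ⟨a.1 ++ [CSym.mid], by
    refine ⟨by simp [a.2.1], ?_⟩
    simp [List.count_append, a.2.2, List.count_singleton]⟩

/-- A subset of `⟦n⟧_{j+1}` is well-formed if distinct elements share no even
face and no odd face. -/
def WfC {n j : ℕ} (ξ : Set (Str n (j+1))) : Prop :=
  ∀ a ∈ ξ, ∀ b ∈ ξ, a ≠ b → posF a ∩ posF b = ∅ ∧ negF a ∩ negF b = ∅

/-- `ξ` moves `μ` to `π`. -/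
def MovesC {n j : ℕ} (ξ : Set (Str n (j+1))) (μ π : Set (Str n j)) : Prop :=
  π = (μ ∪ sPos ξ) \ sNeg ξ ∧ μ = (π ∪ sNeg ξ) \ sPos ξ

/- Resolving the last symbol of `a ++ [c]` is only possible when `c = ⊙`; it is then the
`(j+1)`-st occurrence of `⊙`, whose resolution depends on the parity of `j + 1`. Every other
face of `a ++ [c]` is a face of `a` with `c` appended. -/

section Faces

theorem Str.val_inj {n j : ℕ} {a b : Str n j} : a.1 = b.1 ↔ a = b := Subtype.val_inj

variable (s t : CSym)

def IsFace (l m : List CSym) : Prop :=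
  ∃ (q : ℕ) (h : q < l.length), l.get ⟨q, h⟩ = CSym.mid ∧
    m = l.set q (if Even ((l.take q).count CSym.mid) then s else t)

theorem isFace_append_singleton {l m : List CSym} {c : CSym} :
    IsFace s t (l ++ [c]) m ↔
      (∃ m', IsFace s t l m' ∧ m = m' ++ [c]) ∨
        (c = CSym.mid ∧ m = l ++ [if Even (l.count CSym.mid) then s else t]) := by
  constructor
  · rintro ⟨q, hq, hget, rfl⟩
    rw [List.length_append, List.length_singleton] at hq
    rcases (Nat.lt_succ_iff.mp hq).lt_or_eq with hql | rfl
    · refine Or.inl ⟨_, ⟨q, hql, by simpa [List.getElem_append_left hql] using hget, rfl⟩, ?_⟩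
      rw [List.set_append_left _ _ hql, List.take_append_of_le_length hql.le]
    · refine Or.inr ⟨by simpa using hget, ?_⟩
      rw [List.set_append_right _ _ le_rfl, List.take_left]
      simp
  · rintro (⟨m', ⟨q, hq, hget, rfl⟩, rfl⟩ | ⟨rfl, rfl⟩)
    · refine ⟨q, by simp; omega, by simpa [List.getElem_append_left hq] using hget, ?_⟩
      rw [List.set_append_left _ _ hq, List.take_append_of_le_length hq.le]
    · exact ⟨l.length, by simp, by simp, by simp⟩

variable {s t}

theorem IsFace.length_eq {l m : List CSym} (h : IsFace s t l m) : m.length = l.length := by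
  obtain ⟨q, -, -, rfl⟩ := h
  exact List.length_set

theorem IsFace.count_mid_add_one (hs : s ≠ CSym.mid) (ht : t ≠ CSym.mid) {l m : List CSym}
    (h : IsFace s t l m) : m.count CSym.mid + 1 = l.count CSym.mid := by
  obtain ⟨q, hq, hget, rfl⟩ := h
  have hpos : 0 < l.count CSym.mid := List.count_pos_iff.mpr (List.mem_of_getElem hget)
  have hne : (if Even ((l.take q).count CSym.mid) then s else t) ≠ CSym.mid := by
    split_ifs <;> assumption
  simp only [List.get_eq_getElem] at hget
  rw [List.count_set hq, hget]
  simp only [BEq.rfl, ↓reduceIte, beq_iff_eq, hne, add_zero]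
  omega

variable (s t) {n j : ℕ}

/-- `posF` and `negF` are definitionally `faces CSym.plus CSym.minus` and
`faces CSym.minus CSym.plus`. -/
def faces (a : Str n (j+1)) : Set (Str n j) := {b | IsFace s t a.1 b.1}

variable {s t}

theorem exists_isFace_iff_exists_mem_faces (hs : s ≠ CSym.mid) (ht : t ≠ CSym.mid)
    {a : Str n (j+1)} {P : List CSym → Prop} :
    (∃ m, IsFace s t a.1 m ∧ P m) ↔ ∃ x ∈ faces s t a, P x.1 := by
  constructor
  · rintro ⟨m, hm, hP⟩
    have hcount := hm.count_mid_add_one hs ht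
    rw [a.2.2] at hcount
    exact ⟨⟨m, hm.length_eq.trans a.2.1, by omega⟩, hm, hP⟩
  · rintro ⟨x, hx, hP⟩
    exact ⟨x.1, hx, hP⟩

theorem faces_of_eq_append (hs : s ≠ CSym.mid) (ht : t ≠ CSym.mid) {c : CSym}
    (hc : c ≠ CSym.mid) {a : Str n (j+1)} {a' : Str (n+1) (j+1)} (ha' : a'.1 = a.1 ++ [c])
    (g : Str n j → Str (n+1) j) (hg : ∀ x, (g x).1 = x.1 ++ [c]) :
    faces s t a' = g '' faces s t a := by
  ext b
  simp only [faces, Set.mem_ofPred_eq, ha', isFace_append_singleton, hc, false_and, or_false,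
    exists_isFace_iff_exists_mem_faces hs ht, Set.mem_image, ← Str.val_inj, hg, eq_comm]

theorem faces_appO (hs : s ≠ CSym.mid) (ht : t ≠ CSym.mid) (a : Str n (j+1))
    (last : Str (n+1) (j+1)) (hlast : last.1 = a.1 ++ [if Even (j+1) then s else t]) :
    faces s t (appO a) = appO '' faces s t a ∪ {last} := by
  have happO : ∀ {k} (x : Str n k), (appO x).1 = x.1 ++ [CSym.mid] := fun _ => rfl
  ext b
  simp only [faces, Set.mem_ofPred_eq, happO, isFace_append_singleton, a.2.2, true_and,
    exists_isFace_iff_exists_mem_faces hs ht, Set.mem_union, Set.mem_image,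
    Set.mem_singleton_iff, ← Str.val_inj, hlast, eq_comm]

end Faces

section AppendFaces

variable {n j : ℕ}

theorem posF_appM (a : Str n (j+1)) : posF (appM a) = appM '' posF a :=
  faces_of_eq_append (by decide) (by decide) (by decide) rfl appM fun _ => rfl

theorem negF_appM (a : Str n (j+1)) : negF (appM a) = appM '' negF a :=
  faces_of_eq_append (by decide) (by decide) (by decide) rfl appM fun _ => rfl

theorem posF_appP (a : Str n (j+1)) : posF (appP a) = appP '' posF a :=
  faces_of_eq_append (by decide) (by decide) (by decide) rfl appP fun _ => rfl

theorem negF_appP (a : Str n (j+1)) : negF (appP a) = appP '' negF a :=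
  faces_of_eq_append (by decide) (by decide) (by decide) rfl appP fun _ => rfl

theorem posF_appO (a : Str n (j+1)) :
    posF (appO a) = appO '' posF a ∪ {(if Even (j+1) then appP else appM) a} :=
  faces_appO (by decide) (by decide) a _ (by split_ifs <;> rfl)

theorem negF_appO (a : Str n (j+1)) :
    negF (appO a) = appO '' negF a ∪ {(if Even (j+1) then appM else appP) a} :=
  faces_appO (by decide) (by decide) a _ (by split_ifs <;> rfl)

variable {m k : ℕ} {f : Str n (j+1) → Str m (k+1)} {g : Str n j → Str m k}

theorem sPos_image (h : ∀ a, posF (f a) = g '' posF a) (ξ : Set (Str n (j+1))) :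
    sPos (f '' ξ) = g '' sPos ξ := by
  simp only [sPos, Set.biUnion_image, h, Set.image_iUnion₂]

theorem sNeg_image (h : ∀ a, negF (f a) = g '' negF a) (ξ : Set (Str n (j+1))) :
    sNeg (f '' ξ) = g '' sNeg ξ := by
  simp only [sNeg, Set.biUnion_image, h, Set.image_iUnion₂]

theorem sPos_image_appO (ξ : Set (Str n (j+1))) :
    sPos (appO '' ξ) = appO '' sPos ξ ∪ (if Even (j+1) then appP else appM) '' ξ := by
  simp only [sPos, Set.biUnion_image, posF_appO, Set.iUnion_union_distrib, Set.image_iUnion₂,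
    ← Set.image_eq_iUnion]

theorem sNeg_image_appO (ξ : Set (Str n (j+1))) :
    sNeg (appO '' ξ) = appO '' sNeg ξ ∪ (if Even (j+1) then appM else appP) '' ξ := by
  simp only [sNeg, Set.biUnion_image, negF_appO, Set.iUnion_union_distrib, Set.image_iUnion₂,
    ← Set.image_eq_iUnion]

end AppendFaces

theorem cube_append_faces_general (n j : ℕ) (ξ : Set (Str n (j+1))) :
    ((Even (j+1) →
        sPos (appO '' ξ) = appO '' sPos ξ ∪ appP '' ξ ∧
        sNeg (appO '' ξ) = appO '' sNeg ξ ∪ appM '' ξ) ∧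
     (Odd (j+1) →
        sPos (appO '' ξ) = appO '' sPos ξ ∪ appM '' ξ ∧
        sNeg (appO '' ξ) = appO '' sNeg ξ ∪ appP '' ξ)) ∧
    (sPos (appM '' ξ) = appM '' sPos ξ ∧ sNeg (appM '' ξ) = appM '' sNeg ξ ∧
     sPos (appP '' ξ) = appP '' sPos ξ ∧ sNeg (appP '' ξ) = appP '' sNeg ξ) := by
  refine ⟨⟨fun heven => ?_, fun hodd => ?_⟩,
    sPos_image posF_appM ξ, sNeg_image negF_appM ξ, sPos_image posF_appP ξ, sNeg_image negF_appP ξ⟩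
  · rw [sPos_image_appO, sNeg_image_appO, if_pos heven, if_pos heven]
    exact ⟨rfl, rfl⟩
  · have hnot : ¬Even (j+1) := Nat.not_even_iff_odd.mpr hodd
    rw [sPos_image_appO, sNeg_image_appO, if_neg hnot, if_neg hnot]
    exact ⟨rfl, rfl⟩

/-- Equation (14) of Buckley–Garner: faces of `ξ⊙`, together with
`(ξη)^ε = (ξ^ε)η` for `η ∈ {⊖,⊕}`. -/
theorem cube_append_faces (n j : ℕ) (ξ : Set (Str n (j+1))) (hfin : ξ.Finite) :
    ((Even (j+1) →
        sPos (appO '' ξ) = appO '' sPos ξ ∪ appP '' ξ ∧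
        sNeg (appO '' ξ) = appO '' sNeg ξ ∪ appM '' ξ) ∧
     (Odd (j+1) →
        sPos (appO '' ξ) = appO '' sPos ξ ∪ appM '' ξ ∧
        sNeg (appO '' ξ) = appO '' sNeg ξ ∪ appP '' ξ)) ∧
    (sPos (appM '' ξ) = appM '' sPos ξ ∧ sNeg (appM '' ξ) = appM '' sNeg ξ ∧
     sPos (appP '' ξ) = appP '' sPos ξ ∧ sNeg (appP '' ξ) = appP '' sNeg ξ) :=
  cube_append_faces_general n j ξ
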